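/- Monotonicity under averaging projectors: let G ⊆ GL(d,ℂ) be a finite subgroup spanning M_d(ℂ) with extent ξ, and let H ⊆ G be a finite subgroup of cardinality r. Set Π := (1/r)∑_{P∈H} P. Then ξ(ΠA) ≤ ξ(A) and ξ(AΠ) ≤ ξ(A) for every matrix A. -/

import Mathlib

open Matrix BigOperators

/-- The stabilizer extent of a matrix `M` with respect to a finite set `G` of matrices. -/
noncomputable def xi {d : ℕ} (G : Finset (Matrix (Fin d) (Fin d) ℂ))
    (M : Matrix (Fin d) (Fin d) ℂ) : ℝ :=
  sInf {r : ℝ | ∃ x : Matrix (Fin d) (Fin d) ℂ → ℂ,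
    M = ∑ C ∈ G, x C • C ∧ r = (∑ C ∈ G, ‖x C‖) ^ 2}

section Aux

variable {d : ℕ}

/-- bijection lemma: left multiplication by an invertible element permutes G -/
lemma sum_reindex_left {β : Type*} [AddCommMonoid β]
    (G : Finset (Matrix (Fin d) (Fin d) ℂ))
    (hmul : ∀ A ∈ G, ∀ B ∈ G, A * B ∈ G)
    {P Q : Matrix (Fin d) (Fin d) ℂ} (hP : P ∈ G) (hQ : Q ∈ G)
    (h1 : P * Q = 1) (h2 : Q * P = 1)
    (f : Matrix (Fin d) (Fin d) ℂ → β) :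
    ∑ C ∈ G, f (P * C) = ∑ C ∈ G, f C := by
  refine Finset.sum_nbij' (fun C => P * C) (fun C => Q * C)
    (fun a ha => hmul _ hP _ ha) (fun a ha => hmul _ hQ _ ha) ?_ ?_ (fun a _ => rfl)
  · intro a _; show Q * (P * a) = a; rw [← mul_assoc, h2, one_mul]
  · intro a _; show P * (Q * a) = a; rw [← mul_assoc, h1, one_mul]

lemma sum_reindex_right {β : Type*} [AddCommMonoid β]
    (G : Finset (Matrix (Fin d) (Fin d) ℂ))
    (hmul : ∀ A ∈ G, ∀ B ∈ G, A * B ∈ G)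
    {P Q : Matrix (Fin d) (Fin d) ℂ} (hP : P ∈ G) (hQ : Q ∈ G)
    (h1 : P * Q = 1) (h2 : Q * P = 1)
    (f : Matrix (Fin d) (Fin d) ℂ → β) :
    ∑ C ∈ G, f (C * P) = ∑ C ∈ G, f C := by
  refine Finset.sum_nbij' (fun C => C * P) (fun C => C * Q)
    (fun a ha => hmul _ ha _ hP) (fun a ha => hmul _ ha _ hQ) ?_ ?_ (fun a _ => rfl)
  · intro a _; show a * P * Q = a; rw [mul_assoc, h1, mul_one]
  · intro a _; show a * Q * P = a; rw [mul_assoc, h2, mul_one]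

end Aux

/-- Monotonicity under averaging projectors: if `G` is a finite subgroup of invertible
matrices spanning the matrix space with extent `ξ`, and `H ⊆ G` is a finite subgroup,
then with `Π := (1/|H|) ∑_{P ∈ H} P` one has `ξ(Π*A) ≤ ξ(A)` and `ξ(A*Π) ≤ ξ(A)`. -/
theorem stmt5 {d : ℕ} (G : Finset (Matrix (Fin d) (Fin d) ℂ))
    (hone : (1 : Matrix (Fin d) (Fin d) ℂ) ∈ G)
    (hmul : ∀ A ∈ G, ∀ B ∈ G, A * B ∈ G)
    (hinv : ∀ A ∈ G, ∃ B ∈ G, A * B = 1 ∧ B * A = 1)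
    (hspan : Submodule.span ℂ (G : Set (Matrix (Fin d) (Fin d) ℂ)) = ⊤)
    (H : Finset (Matrix (Fin d) (Fin d) ℂ)) (hHG : H ⊆ G)
    (hHone : (1 : Matrix (Fin d) (Fin d) ℂ) ∈ H)
    (hHmul : ∀ A ∈ H, ∀ B ∈ H, A * B ∈ H)
    (hHinv : ∀ A ∈ H, ∃ B ∈ H, A * B = 1 ∧ B * A = 1)
    (A : Matrix (Fin d) (Fin d) ℂ) :
    xi G (((H.card : ℂ)⁻¹ • ∑ P ∈ H, P) * A) ≤ xi G A ∧
      xi G (A * ((H.card : ℂ)⁻¹ • ∑ P ∈ H, P)) ≤ xi G A := by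
  classical
  -- inverse function within H
  set pinv : Matrix (Fin d) (Fin d) ℂ → Matrix (Fin d) (Fin d) ℂ := fun P =>
    if h : ∃ B ∈ H, P * B = 1 ∧ B * P = 1 then h.choose else 1 with hpinv_def
  have hpinv : ∀ P ∈ H, pinv P ∈ H ∧ P * pinv P = 1 ∧ pinv P * P = 1 := by
    intro P hP
    have h := hHinv P hP
    simp only [hpinv_def, dif_pos h]
    exact ⟨h.choose_spec.1, h.choose_spec.2.1, h.choose_spec.2.2⟩
  have hcard : (0 : ℝ) < H.card := by
    exact_mod_cast Finset.card_pos.2 ⟨1, hHone⟩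
  -- the core estimate, done for both sides uniformly
  have key : ∀ (M : Matrix (Fin d) (Fin d) ℂ), (∀ x : Matrix (Fin d) (Fin d) ℂ → ℂ,
      A = ∑ C ∈ G, x C • C → ∃ y : Matrix (Fin d) (Fin d) ℂ → ℂ,
        M = ∑ C ∈ G, y C • C ∧
          (∑ C ∈ G, ‖y C‖) ≤ ∑ C ∈ G, ‖x C‖) →
      xi G M ≤ xi G A := by
    intro M hM
    unfold xi
    apply le_csInf
    · -- the set for A is nonempty
      have hA : A ∈ Submodule.span ℂ (G : Set (Matrix (Fin d) (Fin d) ℂ)) := by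
        rw [hspan]; trivial
      obtain ⟨f, -, hf⟩ := Submodule.mem_span_finset.1 hA
      exact ⟨(∑ C ∈ G, ‖f C‖) ^ 2, f, hf.symm, rfl⟩
    · rintro b ⟨x, hx, rfl⟩
      obtain ⟨y, hy, hle⟩ := hM x hx
      have hmem : (∑ C ∈ G, ‖y C‖) ^ 2 ∈
          {r : ℝ | ∃ x : Matrix (Fin d) (Fin d) ℂ → ℂ,
            M = ∑ C ∈ G, x C • C ∧ r = (∑ C ∈ G, ‖x C‖) ^ 2} :=
        ⟨y, hy, rfl⟩
      have hbdd : BddBelow {r : ℝ | ∃ x : Matrix (Fin d) (Fin d) ℂ → ℂ,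
          M = ∑ C ∈ G, x C • C ∧ r = (∑ C ∈ G, ‖x C‖) ^ 2} := by
        refine ⟨0, ?_⟩
        rintro r ⟨x, -, rfl⟩
        positivity
      refine le_trans (csInf_le hbdd hmem) ?_
      have hy0 : 0 ≤ ∑ C ∈ G, ‖y C‖ := by positivity
      exact pow_le_pow_left₀ hy0 hle 2
  constructor
  · -- left multiplication
    apply key
    intro x hx
    refine ⟨fun D => (H.card : ℂ)⁻¹ * ∑ P ∈ H, x (pinv P * D), ?_, ?_⟩
    · rw [Matrix.smul_mul, Finset.sum_mul]
      have step : ∀ P ∈ H, P * A = ∑ D ∈ G, x (pinv P * D) • D := by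
        intro P hP
        obtain ⟨hPi, h1, h2⟩ := hpinv P hP
        calc P * A = ∑ C ∈ G, x C • (P * C) := by
              rw [hx, Finset.mul_sum]; simp [Matrix.mul_smul]
          _ = ∑ C ∈ G, x (pinv P * C) • C := by
              rw [← sum_reindex_left G hmul (hHG hP) (hHG hPi) h1 h2
                (fun C => x (pinv P * C) • C)]
              refine Finset.sum_congr rfl fun C hC => ?_
              rw [← mul_assoc, h2, one_mul]
      rw [Finset.sum_congr rfl step, Finset.sum_comm]
      rw [Finset.smul_sum]
      refine Finset.sum_congr rfl fun D hD => ?_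
      show _ = ((H.card : ℂ)⁻¹ * ∑ P ∈ H, x (pinv P * D)) • D
      rw [← Finset.sum_smul, smul_smul, Finset.mul_sum]
    · calc ∑ D ∈ G, ‖(H.card : ℂ)⁻¹ * ∑ P ∈ H, x (pinv P * D)‖
          ≤ ∑ D ∈ G, (H.card : ℝ)⁻¹ * ∑ P ∈ H, ‖x (pinv P * D)‖ := by
            refine Finset.sum_le_sum fun D _ => ?_
            rw [norm_mul, norm_inv, Complex.norm_natCast]
            exact mul_le_mul_of_nonneg_left (norm_sum_le _ _) (by positivity)
        _ = (H.card : ℝ)⁻¹ * ∑ P ∈ H, ∑ D ∈ G, ‖x (pinv P * D)‖ := by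
            rw [← Finset.mul_sum, Finset.sum_comm]
        _ = (H.card : ℝ)⁻¹ * ∑ P ∈ H, ∑ C ∈ G, ‖x C‖ := by
            congr 1
            refine Finset.sum_congr rfl fun P hP => ?_
            obtain ⟨hPi, h1, h2⟩ := hpinv P hP
            exact sum_reindex_left G hmul (hHG hPi) (hHG hP) h2 h1
              (fun C => ‖x C‖)
        _ = ∑ C ∈ G, ‖x C‖ := by
            rw [Finset.sum_const, nsmul_eq_mul, ← mul_assoc,
              inv_mul_cancel₀ hcard.ne', one_mul]
  · -- right multiplication
    apply key
    intro x hx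
    refine ⟨fun D => (H.card : ℂ)⁻¹ * ∑ P ∈ H, x (D * pinv P), ?_, ?_⟩
    · rw [Matrix.mul_smul, Finset.mul_sum]
      have step : ∀ P ∈ H, A * P = ∑ D ∈ G, x (D * pinv P) • D := by
        intro P hP
        obtain ⟨hPi, h1, h2⟩ := hpinv P hP
        calc A * P = ∑ C ∈ G, x C • (C * P) := by
              rw [hx, Finset.sum_mul]; simp [Matrix.smul_mul]
          _ = ∑ C ∈ G, x (C * pinv P) • C := by
              rw [← sum_reindex_right G hmul (hHG hP) (hHG hPi) h1 h2
                (fun C => x (C * pinv P) • C)]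
              refine Finset.sum_congr rfl fun C hC => ?_
              rw [mul_assoc, h1, mul_one]
      rw [Finset.sum_congr rfl step, Finset.sum_comm]
      rw [Finset.smul_sum]
      refine Finset.sum_congr rfl fun D hD => ?_
      show _ = ((H.card : ℂ)⁻¹ * ∑ P ∈ H, x (D * pinv P)) • D
      rw [← Finset.sum_smul, smul_smul, Finset.mul_sum]
    · calc ∑ D ∈ G, ‖(H.card : ℂ)⁻¹ * ∑ P ∈ H, x (D * pinv P)‖
          ≤ ∑ D ∈ G, (H.card : ℝ)⁻¹ * ∑ P ∈ H, ‖x (D * pinv P)‖ := by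
            refine Finset.sum_le_sum fun D _ => ?_
            rw [norm_mul, norm_inv, Complex.norm_natCast]
            exact mul_le_mul_of_nonneg_left (norm_sum_le _ _) (by positivity)
        _ = (H.card : ℝ)⁻¹ * ∑ P ∈ H, ∑ D ∈ G, ‖x (D * pinv P)‖ := by
            rw [← Finset.mul_sum, Finset.sum_comm]
        _ = (H.card : ℝ)⁻¹ * ∑ P ∈ H, ∑ C ∈ G, ‖x C‖ := by
            congr 1
            refine Finset.sum_congr rfl fun P hP => ?_
            obtain ⟨hPi, h1, h2⟩ := hpinv P hP
            exact sum_reindex_right G hmul (hHG hPi) (hHG hP) h2 h1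
              (fun C => ‖x C‖)
        _ = ∑ C ∈ G, ‖x C‖ := by
            rw [Finset.sum_const, nsmul_eq_mul, ← mul_assoc,
              inv_mul_cancel₀ hcard.ne', one_mul]
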